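/- arXiv:2506.01870 — 2 statements merged into one kernel-verified Lean document; each statement's English description precedes it below -/
import Mathlib

section
/- The infinite series ∑_{k=0}^∞ 8^k·(315k²+324k+52) / ((6k+1)(6k+5)·C(6k,3k)) converges and equals 3π/2 + 10. -/
open MeasureTheory intervalIntegral

lemma beta_nat (m : ℕ) : ∀ n : ℕ, ∫ x in (0:ℝ)..1, x ^ n * (1 - x) ^ m
    = (n.factorial * m.factorial : ℝ) / (n + m + 1).factorial := by
  induction m with
  | zero =>
    intro n
    simp only [pow_zero, mul_one, integral_pow, one_pow, ne_eq]
    rw [Nat.factorial_succ]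
    push_cast
    rw [Nat.factorial_zero]
    have : ((n:ℝ)+1) ≠ 0 := by positivity
    have h3 : (n.factorial : ℝ) ≠ 0 := by exact_mod_cast n.factorial_ne_zero
    field_simp
    simp
  | succ m IH =>
    intro n
    have hder : ∀ x ∈ Set.uIcc (0:ℝ) 1, HasDerivAt (fun x : ℝ => x ^ (n+1) * (1 - x) ^ (m+1))
        ((n+1 : ℝ) * x ^ n * (1 - x) ^ (m+1) - (m+1 : ℝ) * (x ^ (n+1) * (1 - x) ^ m)) x := by
      intro x _
      have h1 : HasDerivAt (fun x : ℝ => x ^ (n+1)) ((n+1 : ℝ) * x ^ n) x := by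
        simpa using (hasDerivAt_pow (n+1) x)
      have h2 : HasDerivAt (fun x : ℝ => (1 - x) ^ (m+1)) (-((m+1 : ℝ) * (1 - x) ^ m)) x := by
        have := ((hasDerivAt_pow (m+1) (1 - x)).comp x ((hasDerivAt_id x).const_sub 1))
        simpa [Function.comp_def] using this.neg.neg
      simpa [Pi.mul_def, mul_comm, mul_left_comm, mul_assoc, sub_eq_add_neg, add_comm] using (h1.mul h2).congr_deriv (by push_cast; ring)
    have hcont : ∀ (a b : ℕ), IntervalIntegrable (fun x : ℝ => x ^ a * (1 - x) ^ b) volume 0 1 := by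
      intro a b
      exact (Continuous.mul (continuous_pow a) (((continuous_const.sub continuous_id)).pow b)).intervalIntegrable 0 1
    have hInt : IntervalIntegrable (fun x : ℝ => (n+1 : ℝ) * x ^ n * (1 - x) ^ (m+1) - (m+1 : ℝ) * (x ^ (n+1) * (1 - x) ^ m)) volume 0 1 := by
      apply IntervalIntegrable.sub
      · simpa [mul_assoc] using ((hcont n (m+1)).const_mul ((n:ℝ)+1))
      · exact (hcont (n+1) m).const_mul _
    have key := integral_eq_sub_of_hasDerivAt hder hInt
    rw [intervalIntegral.integral_sub (by simpa [mul_assoc] using ((hcont n (m+1)).const_mul ((n:ℝ)+1))) ((hcont (n+1) m).const_mul _)] at key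
    simp only [one_pow, sub_self, zero_pow, mul_zero, zero_mul, Nat.succ_ne_zero, ne_eq,
      not_false_iff, sub_zero, zero_sub] at key
    -- key : ∫ (n+1) x^n (1-x)^(m+1) - ∫ (m+1)(x^(n+1)(1-x)^m) = 0
    have e1 : ∫ x in (0:ℝ)..1, (n+1 : ℝ) * x ^ n * (1 - x) ^ (m+1)
        = ((n:ℝ)+1) * ∫ x in (0:ℝ)..1, x ^ n * (1 - x) ^ (m+1) := by
      rw [← intervalIntegral.integral_const_mul]; congr 1; ext x; ring
    have e2 : ∫ x in (0:ℝ)..1, (m+1 : ℝ) * (x ^ (n+1) * (1 - x) ^ m)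
        = ((m:ℝ)+1) * ∫ x in (0:ℝ)..1, x ^ (n+1) * (1 - x) ^ m := by
      rw [← intervalIntegral.integral_const_mul]
    rw [e1, e2, IH (n+1)] at key
    have hne : ((n:ℝ)+1) ≠ 0 := by positivity
    have : (∫ x in (0:ℝ)..1, x ^ n * (1 - x) ^ (m+1))
        = ((m:ℝ)+1) * ((↑(n+1).factorial * ↑m.factorial) / ↑(n + 1 + m + 1).factorial) / ((n:ℝ)+1) := by
      field_simp at key ⊢
      linarith [key]
    rw [this]
    have hidx : n + 1 + m + 1 = n + (m+1) + 1 := by omega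
    rw [hidx, Nat.factorial_succ n, Nat.factorial_succ m]
    push_cast
    have h3 : ((n+(m+1)+1 : ℕ).factorial : ℝ) ≠ 0 := by exact_mod_cast (n+(m+1)+1).factorial_ne_zero
    field_simp

noncomputable def dd (n : ℕ) : ℝ := 2 ^ n / (Nat.centralBinom n)

lemma cb_pos (n : ℕ) : (0:ℝ) < Nat.centralBinom n := by
  exact_mod_cast Nat.centralBinom_pos n

lemma dd_pos (n : ℕ) : 0 < dd n := by
  exact div_pos (by positivity) (cb_pos n)

lemma dd_succ (n : ℕ) : dd (n+1) = dd n * (n+1) / (2*n+1) := by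
  have h := Nat.succ_mul_centralBinom_succ n
  have hℝ : ((n:ℝ)+1) * (Nat.centralBinom (n+1) : ℝ) = 2 * (2*n+1) * Nat.centralBinom n := by
    exact_mod_cast h
  have h1 : (Nat.centralBinom (n+1) : ℝ) ≠ 0 := (cb_pos _).ne'
  have h2 : (Nat.centralBinom n : ℝ) ≠ 0 := (cb_pos _).ne'
  have h3 : ((n:ℝ)+1) ≠ 0 := by positivity
  have h4 : (2*(n:ℝ)+1) ≠ 0 := by positivity
  unfold dd
  rw [pow_succ]
  field_simp
  linear_combination (-1:ℝ) * hℝ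

lemma dd_integral (n : ℕ) : dd n = ∫ x in (0:ℝ)..1, (2*n+1 : ℝ) * (2*x*(1-x)) ^ n := by
  have : (fun x : ℝ => (2*n+1 : ℝ) * (2*x*(1-x)) ^ n)
      = fun x : ℝ => ((2*n+1 : ℝ) * 2 ^ n) * (x ^ n * (1-x) ^ n) := by
    ext x; rw [show (2*x*(1-x)) = 2*(x*(1-x)) by ring, mul_pow, mul_pow]; ring
  rw [this, intervalIntegral.integral_const_mul, beta_nat n n]
  have hspec : (Nat.centralBinom n) * (n.factorial * n.factorial) = (2*n).factorial := by
    have := Nat.choose_mul_factorial_mul_factorial (show n ≤ 2*n by omega)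
    simpa [Nat.centralBinom, two_mul, mul_assoc] using this
  have hfac : ((n + n + 1).factorial : ℝ) = (2*n+1) * (2*n).factorial := by
    rw [show n + n + 1 = (2*n) + 1 by ring, Nat.factorial_succ]; push_cast; ring
  unfold dd
  rw [hfac]
  have h2 : ((2*n).factorial : ℝ) ≠ 0 := by exact_mod_cast (2*n).factorial_ne_zero
  have h3 : (Nat.centralBinom n : ℝ) ≠ 0 := (cb_pos _).ne'
  have h4 : (2*(n:ℝ)+1) ≠ 0 := by positivity
  have hs : (Nat.centralBinom n : ℝ) * (n.factorial * n.factorial) = ((2*n).factorial : ℝ) := by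
    exact_mod_cast hspec
  field_simp
  linear_combination (-1:ℝ) * hs

lemma denom_pos (x : ℝ) : (0:ℝ) < 2*x^2 - 2*x + 1 := by nlinarith [sq_nonneg (2*x-1)]

noncomputable def gg (x : ℝ) : ℝ := (1 + 2*x*(1-x)) / (2*x^2 - 2*x + 1)^2

lemma hasDeriv_F (x : ℝ) :
    HasDerivAt (fun x : ℝ => (2*x-1)/(2*x^2-2*x+1) + Real.arctan (2*x-1)) (gg x) x := by
  have h1 : HasDerivAt (fun x : ℝ => 2*x-1) 2 x := by
    simpa using ((hasDerivAt_id x).const_mul 2).sub_const 1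
  have hden : HasDerivAt (fun x : ℝ => 2*x^2-2*x+1) (4*x-2) x := by
    have h := (((hasDerivAt_pow 2 x).const_mul 2).sub (((hasDerivAt_id x)).const_mul 2)).add_const 1
    refine h.congr_deriv ?_
    norm_num; ring
  have hdne : (2*x^2-2*x+1) ≠ 0 := (denom_pos x).ne'
  have hq : HasDerivAt (fun x : ℝ => (2*x-1)/(2*x^2-2*x+1))
      ((2*(2*x^2-2*x+1) - (2*x-1)*(4*x-2))/(2*x^2-2*x+1)^2) x := h1.div hden hdne
  have ha : HasDerivAt (fun x : ℝ => Real.arctan (2*x-1)) ((1/(1+(2*x-1)^2)) * 2) x :=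
    by have := (Real.hasDerivAt_arctan (2*x-1)).comp x h1; exact this
  have := hq.add ha
  refine this.congr_deriv ?_
  unfold gg
  have h2 : (1+(2*x-1)^2) ≠ 0 := by positivity
  rw [show (1+(2*x-1)^2) = 2*(2*x^2-2*x+1) by ring]
  field_simp
  ring

lemma cont_gg : Continuous gg := by
  apply Continuous.div (by continuity) (by continuity)
  intro x
  exact pow_ne_zero _ (denom_pos x).ne'

lemma integral_gg : ∫ x in (0:ℝ)..1, gg x = 2 + Real.pi/2 := by
  rw [intervalIntegral.integral_eq_sub_of_hasDerivAt (fun x _ => hasDeriv_F x)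
    (cont_gg.intervalIntegrable 0 1)]
  have h1 : (2*(1:ℝ)-1) = 1 := by norm_num
  have h0 : (2*(0:ℝ)-1) = -1 := by norm_num
  rw [h1, h0, Real.arctan_neg, Real.arctan_one]
  norm_num
  ring

lemma hasSum_fiber {x : ℝ} (hx : x ∈ Set.Ioc (0:ℝ) 1) :
    HasSum (fun n : ℕ => (2*n+1 : ℝ) * (2*x*(1-x))^n) (gg x) := by
  set u : ℝ := 2*x*(1-x) with hu
  have hu0 : 0 ≤ u := by
    have := hx.1; have := hx.2; apply mul_nonneg (by positivity) (by linarith)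
  have hu1 : u < 1 := by nlinarith [sq_nonneg (2*x-1), hx.1, hx.2]
  have hnorm : ‖u‖ < 1 := by rwa [Real.norm_eq_abs, abs_of_nonneg hu0]
  have hg : HasSum (fun n : ℕ => u^n) (1-u)⁻¹ := hasSum_geometric_of_lt_one hu0 hu1
  have hng : HasSum (fun n : ℕ => (n:ℝ)*u^n) (u/(1-u)^2) :=
    hasSum_coe_mul_geometric_of_norm_lt_one hnorm
  have h := (hng.mul_left 2).add hg
  have hne : (1-u) ≠ 0 := by linarith
  have heq : (fun n : ℕ => (2*(n:ℝ)+1)*u^n) = fun n : ℕ => 2*((n:ℝ)*u^n)+u^n := by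
    funext n; ring
  rw [show (fun n : ℕ => (2*(n:ℝ)+1 : ℝ) * (2*x*(1-x))^n) = fun n : ℕ => 2*((n:ℝ)*u^n)+u^n by
    rw [← heq, hu]]
  have hval : gg x = 2*(u/(1-u)^2)+(1-u)⁻¹ := by
    unfold gg
    have h2 : 2*x^2-2*x+1 = 1 - u := by rw [hu]; ring
    rw [h2]
    field_simp
    ring
  rw [hval]
  exact h

lemma summable_dd : Summable dd := by
  apply summable_of_ratio_norm_eventually_le (r := 3/4) (by norm_num)
  filter_upwards [Filter.eventually_ge_atTop 1] with n hn
  rw [Real.norm_eq_abs, Real.norm_eq_abs, abs_of_pos (dd_pos _), abs_of_pos (dd_pos _), dd_succ]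
  rw [div_le_iff₀ (by positivity)]
  have h1 : (1:ℝ) ≤ n := by exact_mod_cast hn
  nlinarith [dd_pos n]

lemma hasSum_dd : HasSum dd (2 + Real.pi/2) := by
  have hF_int : ∀ n : ℕ, MeasureTheory.IntegrableOn
      (fun x : ℝ => (2*n+1 : ℝ) * (2*x*(1-x))^n) (Set.Ioc 0 1) := by
    intro n
    exact (Continuous.integrableOn_Ioc (by continuity))
  have hnorm_eq : ∀ n : ℕ, (∫ x in Set.Ioc (0:ℝ) 1, ‖(2*n+1 : ℝ) * (2*x*(1-x))^n‖) = dd n := by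
    intro n
    rw [MeasureTheory.setIntegral_congr_fun measurableSet_Ioc
      (fun x hx => by
        have h1 : (0:ℝ) ≤ 2*x*(1-x) := mul_nonneg (by nlinarith [hx.1]) (by linarith [hx.2])
        exact Real.norm_of_nonneg (by positivity))]
    rw [dd_integral n, intervalIntegral.integral_of_le zero_le_one]
  have key := MeasureTheory.hasSum_integral_of_summable_integral_norm
    (μ := MeasureTheory.volume.restrict (Set.Ioc (0:ℝ) 1))
    (F := fun (n : ℕ) (x : ℝ) => (2*n+1 : ℝ) * (2*x*(1-x))^n)
    hF_int (summable_dd.congr (fun n => (hnorm_eq n).symm))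
  have hterm : (fun n : ℕ => ∫ x in Set.Ioc (0:ℝ) 1, (2*n+1 : ℝ) * (2*x*(1-x))^n) = dd := by
    funext n
    rw [dd_integral n, intervalIntegral.integral_of_le zero_le_one]
  have hval : (∫ x in Set.Ioc (0:ℝ) 1, ∑' n : ℕ, (2*n+1 : ℝ) * (2*x*(1-x))^n) = 2 + Real.pi/2 := by
    rw [MeasureTheory.setIntegral_congr_fun measurableSet_Ioc
      (fun x hx => (hasSum_fiber hx).tsum_eq)]
    rw [← intervalIntegral.integral_of_le zero_le_one, integral_gg]
  rw [hterm, hval] at key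
  exact key

lemma hasSum_grouped :
    HasSum (fun k : ℕ => dd (3*k) + dd (3*k+1) + dd (3*k+2)) (2 + Real.pi/2) := by
  have h := (Nat.divModEquiv 3).symm.hasSum_iff.mpr hasSum_dd
  dsimp [Function.comp_def] at h
  refine h.prod_fiberwise fun k => ?_
  have hf := hasSum_fintype (fun j : Fin 3 => dd (k*3 + (j:ℕ)))
  convert hf using 1
  · funext c; rfl
  rw [Fin.sum_univ_three]
  norm_num [mul_comm]

lemma hasSum_tele : HasSum (fun k : ℕ => 4*dd (3*k) - 4*dd (3*(k+1))) 4 := by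
  have hs1 : Summable (fun k : ℕ => dd (3*k)) :=
    summable_dd.comp_injective (fun a b h => by omega)
  have hs2 : Summable (fun k : ℕ => dd (3*(k+1))) :=
    summable_dd.comp_injective (fun a b h => by omega)
  have hsum : Summable (fun k : ℕ => 4*dd (3*k) - 4*dd (3*(k+1))) :=
    (hs1.mul_left 4).sub (hs2.mul_left 4)
  rw [hsum.hasSum_iff_tendsto_nat]
  have hps : ∀ n : ℕ, ∑ k ∈ Finset.range n, (4*dd (3*k) - 4*dd (3*(k+1)))
      = 4*dd 0 - 4*dd (3*n) := fun n => Finset.sum_range_sub' (fun k => 4*dd (3*k)) n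
  have h3 : Filter.Tendsto (fun n : ℕ => 3*n) Filter.atTop Filter.atTop :=
    Filter.tendsto_atTop_mono (fun n => by dsimp; omega) Filter.tendsto_id
  have hd0 : dd 0 = 1 := by simp [dd, Nat.centralBinom]
  have h0 : Filter.Tendsto (fun n : ℕ => dd (3*n)) Filter.atTop (nhds 0) :=
    summable_dd.tendsto_atTop_zero.comp h3
  have ht : Filter.Tendsto (fun n : ℕ => 4*dd 0 - 4*dd (3*n)) Filter.atTop
      (nhds (4*dd 0 - 4*0)) := tendsto_const_nhds.sub (h0.const_mul 4)
  refine Filter.Tendsto.congr (fun n => (hps n).symm) ?_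
  convert ht using 2
  rw [hd0]; ring

lemma pointwise (k : ℕ) :
    (8 : ℝ) ^ k * (315 * (k : ℝ) ^ 2 + 324 * k + 52) /
        ((6 * (k : ℝ) + 1) * (6 * k + 5) * (Nat.choose (6 * k) (3 * k)))
    = 3*(dd (3*k) + dd (3*k+1) + dd (3*k+2)) + (4*dd (3*k) - 4*dd (3*(k+1))) := by
  have hc : ((6*k).choose (3*k) : ℝ) = (Nat.centralBinom (3*k) : ℝ) := by
    rw [Nat.centralBinom, show 2*(3*k) = 6*k from by ring]
  have e1 := dd_succ (3*k)
  have e2 := dd_succ (3*k+1)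
  have e3 := dd_succ (3*k+2)
  push_cast at e1 e2 e3
  have hdd : dd (3*k) = 2^(3*k) / (Nat.centralBinom (3*k) : ℝ) := rfl
  have h8 : (8:ℝ)^k = 2^(3*k) := by rw [pow_mul]; norm_num
  rw [show 3*(k+1) = 3*k+2+1 from by ring]
  rw [show (3*k+1+1) = 3*k+2 from rfl] at e2
  rw [e3, e2, e1, hdd, hc, h8]
  have hA : (Nat.centralBinom (3*k) : ℝ) ≠ 0 := (cb_pos _).ne'
  have h1 : (6*(k:ℝ)+1) ≠ 0 := by positivity
  have h5 : (6*(k:ℝ)+5) ≠ 0 := by positivity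
  have h3 : (2*(3*(k:ℝ))+1) ≠ 0 := by positivity
  have h3' : (2*(3*(k:ℝ)+1)+1) ≠ 0 := by positivity
  have h3'' : (2*(3*(k:ℝ)+2)+1) ≠ 0 := by positivity
  field_simp
  ring

theorem series_stmt_11 :
    HasSum (fun k : ℕ =>
      (8 : ℝ) ^ k * (315 * (k : ℝ) ^ 2 + 324 * k + 52) /
        ((6 * (k : ℝ) + 1) * (6 * k + 5) * (Nat.choose (6 * k) (3 * k))))
      (3 * Real.pi / 2 + 10) := by
  have h1 := (hasSum_grouped.mul_left 3).add hasSum_tele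
  have h2 : (fun k : ℕ =>
      (8 : ℝ) ^ k * (315 * (k : ℝ) ^ 2 + 324 * k + 52) /
        ((6 * (k : ℝ) + 1) * (6 * k + 5) * (Nat.choose (6 * k) (3 * k))))
      = fun k : ℕ => 3*(dd (3*k) + dd (3*k+1) + dd (3*k+2)) + (4*dd (3*k) - 4*dd (3*(k+1))) :=
    funext pointwise
  rw [h2]
  rw [show (3 * Real.pi / 2 + 10 : ℝ) = 3 * (2 + Real.pi / 2) + 4 by ring]
  exact h1
end

section
/- For every nonnegative integer n, ∑_{k=0}^n (4536k³-4500k²+978k+5)·C(6k,3k) / ((2k-1)(6k-1)(6k-5)·4096^k) = -C(6n,3n)/4096^n. -/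
lemma key_nat (k : ℕ) :
    Nat.choose (6 * k + 6) (3 * k + 3) * ((3 * k + 1) * (3 * k + 2) * (3 * k + 3))^2 =
    Nat.choose (6 * k) (3 * k) *
      ((6 * k + 1) * (6 * k + 2) * (6 * k + 3) * (6 * k + 4) * (6 * k + 5) * (6 * k + 6)) := by
  have h1 := Nat.choose_mul_factorial_mul_factorial (show 3 * k ≤ 6 * k by omega)
  have h2 := Nat.choose_mul_factorial_mul_factorial (show 3 * k + 3 ≤ 6 * k + 6 by omega)
  rw [show 6 * k - 3 * k = 3 * k by omega] at h1
  rw [show 6 * k + 6 - (3 * k + 3) = 3 * k + 3 by omega] at h2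
  have e3 : (3 * k + 3).factorial = (3 * k + 1) * (3 * k + 2) * (3 * k + 3) * (3 * k).factorial := by
    simp [show 3*k+3 = (3*k+2)+1 by omega, show 3*k+2 = (3*k+1)+1 by omega, Nat.factorial_succ]
    ring
  have e6 : (6 * k + 6).factorial =
      (6 * k + 1) * (6 * k + 2) * (6 * k + 3) * (6 * k + 4) * (6 * k + 5) * (6 * k + 6) *
        (6 * k).factorial := by
    simp [show 6*k+6 = (6*k+5)+1 by omega, show 6*k+5 = (6*k+4)+1 by omega,
      show 6*k+4 = (6*k+3)+1 by omega, show 6*k+3 = (6*k+2)+1 by omega,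
      show 6*k+2 = (6*k+1)+1 by omega, Nat.factorial_succ]
    ring
  have hpos : 0 < (3 * k).factorial * (3 * k).factorial := by positivity
  apply Nat.eq_of_mul_eq_mul_right hpos
  calc Nat.choose (6 * k + 6) (3 * k + 3) * ((3 * k + 1) * (3 * k + 2) * (3 * k + 3))^2 *
        ((3 * k).factorial * (3 * k).factorial)
      = Nat.choose (6 * k + 6) (3 * k + 3) * (3 * k + 3).factorial * (3 * k + 3).factorial := by
        rw [e3]; ring
    _ = (6 * k + 6).factorial := h2
    _ = (6 * k + 1) * (6 * k + 2) * (6 * k + 3) * (6 * k + 4) * (6 * k + 5) * (6 * k + 6) *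
        (Nat.choose (6 * k) (3 * k) * (3 * k).factorial * (3 * k).factorial) := by rw [e6, h1]
    _ = _ := by ring

theorem series_stmt_12 (n : ℕ) :
    ∑ k ∈ Finset.range (n + 1),
      (4536 * (k : ℝ) ^ 3 - 4500 * k ^ 2 + 978 * k + 5) * (Nat.choose (6 * k) (3 * k)) /
        ((2 * (k : ℝ) - 1) * (6 * k - 1) * (6 * k - 5) * 4096 ^ k)
    = -((Nat.choose (6 * n) (3 * n) : ℝ) / 4096 ^ n) := by
  induction n with
  | zero => norm_num
  | succ n ih =>
    rw [Finset.sum_range_succ, ih]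
    have hkey : (Nat.choose (6 * (n + 1)) (3 * (n + 1)) : ℝ) *
        ((3 * (n:ℝ) + 1) * (3 * n + 2) * (3 * n + 3))^2 =
        (Nat.choose (6 * n) (3 * n) : ℝ) *
        ((6 * (n:ℝ) + 1) * (6 * n + 2) * (6 * n + 3) * (6 * n + 4) * (6 * n + 5) * (6 * n + 6)) := by
      have := key_nat n
      have hc : (Nat.choose (6 * n + 6) (3 * n + 3) : ℝ) *
          (((3 * n + 1) * (3 * n + 2) * (3 * n + 3) : ℕ) : ℝ)^2 =
          (Nat.choose (6 * n) (3 * n) : ℝ) *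
          (((6 * n + 1) * (6 * n + 2) * (6 * n + 3) * (6 * n + 4) * (6 * n + 5) * (6 * n + 6) : ℕ) : ℝ) := by
        exact_mod_cast congrArg (Nat.cast : ℕ → ℝ) this
      rw [show 6 * (n + 1) = 6 * n + 6 by ring, show 3 * (n + 1) = 3 * n + 3 by ring]
      push_cast at hc
      convert hc using 2
    set c : ℝ := (Nat.choose (6 * n) (3 * n) : ℝ) with hc
    set c' : ℝ := (Nat.choose (6 * (n + 1)) (3 * (n + 1)) : ℝ) with hc'
    have hR : ((3 * (n:ℝ) + 1) * (3 * n + 2) * (3 * n + 3)) ≠ 0 := by positivity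
    have hc'eq : c' = c * ((6 * (n:ℝ) + 1) * (6 * n + 2) * (6 * n + 3) * (6 * n + 4) * (6 * n + 5) * (6 * n + 6)) / ((3 * (n:ℝ) + 1) * (3 * n + 2) * (3 * n + 3))^2 := by
      rw [eq_div_iff (pow_ne_zero 2 hR)]
      linarith [hkey]
    rw [hc'eq]
    have h1 : (2 * ((n:ℝ) + 1) - 1) ≠ 0 := by
      have : (0:ℝ) ≤ n := Nat.cast_nonneg n
      intro h; nlinarith
    have h2 : (6 * ((n:ℝ) + 1) - 1) ≠ 0 := by
      have : (0:ℝ) ≤ n := Nat.cast_nonneg n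
      intro h; nlinarith
    have h3 : (6 * ((n:ℝ) + 1) - 5) ≠ 0 := by
      have : (0:ℝ) ≤ n := Nat.cast_nonneg n
      intro h; nlinarith
    have h4 : (4096 : ℝ) ^ n ≠ 0 := by positivity
    push_cast
    rw [show (2 * ((n:ℝ) + 1) - 1) * (6 * ((n:ℝ) + 1) - 1) * (6 * ((n:ℝ) + 1) - 5) =
      (2 * (n:ℝ) + 1) * (6 * n + 5) * (6 * n + 1) by ring]
    field_simp
    ring
end
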